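/- arXiv:1806.10916 — 4 statements merged into one kernel-verified Lean document; each statement's English description precedes it below -/
import Mathlib

section
/- Let F : ℝⁿ → ℝⁿ be C¹ with ‖F(z)‖ and ‖dF(z)‖ uniformly bounded, let φᵗ be its flow, and let C ⊆ ℝⁿ be an open set positively invariant under φᵗ. If the linearized system ẏ = dF(φᵗ(x))·y along every trajectory starting in C is linearly C-positive stable, i.e. there exists λ > 0 such that for all x ∈ C, z ∈ ℝⁿ and t ≥ 0 one has ‖Ψₓᵗ(z)‖ ≤ λ‖z‖ where Ψₓᵗ is the flow of the linearized system, then the nonlinear system is C-positive stable: for all x, y ∈ C with the segment [x,y] contained in C and all t ≥ 0, ‖φᵗ(x) − φᵗ(y)‖ ≤ λ‖x − y‖. -/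
/-!
Let `a, b` be nearby points of the segment `[x, y]`. The difference `φᵗ a - φᵗ b - Ψₐᵗ (a - b)`
satisfies a linear differential inequality whose forcing term is controlled by the modulus of
continuity of `dF` on a compact ball containing all trajectories up to time `t`; by Gronwall it
is at most `η ‖a - b‖` once `a, b` are close enough. With linear stability this makes `φᵗ`
locally `(λ + η)`-Lipschitz along the segment, and chaining short steps gives `λ ‖x - y‖`.
-/

open Set Real Metric
open scoped NNReal

variable {E : Type*} [NormedAddCommGroup E] [NormedSpace ℝ E]

theorem gronwallBound_le_mul_exp {δ K ε x : ℝ} (hK : 0 ≤ K) (hε : 0 ≤ ε) :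
    gronwallBound δ K ε x ≤ (δ + ε * x) * exp (K * x) := by
  rcases hK.eq_or_lt with rfl | hK
  · simp [gronwallBound_K0]
  rw [gronwallBound_of_K_ne_0 hK.ne', add_mul, add_le_add_iff_left, div_mul_eq_mul_div,
    div_le_iff₀ hK]
  -- `1 - e^{-Kx} ≤ Kx`, multiplied by `e^{Kx}`
  have h := add_one_le_exp (-(K * x))
  rw [exp_neg] at h
  have hpos := exp_pos (K * x)
  have hKx : exp (K * x) - 1 ≤ K * x * exp (K * x) := by
    field_simp at h
    nlinarith
  nlinarith [mul_le_mul_of_nonneg_left hKx hε]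

theorem norm_le_of_norm_deriv_le_mul_add {f f' : ℝ → E} {δ K ε t : ℝ} (hK : 0 ≤ K) (hε : 0 ≤ ε)
    (ht : 0 ≤ t) (hf : ∀ u ∈ Icc 0 t, HasDerivAt f (f' u) u) (h0 : ‖f 0‖ ≤ δ)
    (bound : ∀ u ∈ Ico 0 t, ‖f' u‖ ≤ K * ‖f u‖ + ε) :
    ‖f t‖ ≤ (δ + ε * t) * exp (K * t) := by
  have h := norm_le_gronwallBound_of_norm_deriv_right_le
    (fun u hu => (hf u hu).continuousAt.continuousWithinAt)
    (fun u hu => (hf u (Ico_subset_Icc_self hu)).hasDerivWithinAt) h0 bound t ⟨ht, le_rfl⟩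
  rw [sub_zero] at h
  exact h.trans (gronwallBound_le_mul_exp hK hε)

theorem norm_sub_le_of_forall_norm_sub_le_on_segment {E' : Type*} [NormedAddCommGroup E']
    {f : E → E'} {x y : E} {L δ : ℝ}
    (hδ : 0 < δ) (hf : ∀ a ∈ segment ℝ x y, ∀ b ∈ segment ℝ x y, ‖a - b‖ < δ →
      ‖f a - f b‖ ≤ L * ‖a - b‖) :
    ‖f x - f y‖ ≤ L * ‖x - y‖ := by
  obtain ⟨N, hN⟩ := exists_nat_gt (‖x - y‖ / δ)
  have hN0 : (0 : ℝ) < N := (div_nonneg (norm_nonneg _) hδ.le).trans_lt hN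
  set p : ℕ → E := fun i => AffineMap.lineMap x y ((i : ℝ) / N)
  have hp_mem : ∀ i ≤ N, p i ∈ segment ℝ x y := fun i hi => by
    rw [segment_eq_image_lineMap]
    exact ⟨_, ⟨by positivity, div_le_one_of_le₀ (by exact_mod_cast hi) hN0.le⟩, rfl⟩
  have hp_step : ∀ i, ‖p i - p (i + 1)‖ = ‖x - y‖ / N := fun i => by
    rw [← dist_eq_norm, dist_lineMap_lineMap, dist_eq_norm, dist_eq_norm]
    push_cast
    rw [show (i : ℝ) / N - (i + 1) / N = -(1 / N) by ring, norm_neg, norm_div, norm_one,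
      Real.norm_of_nonneg hN0.le]
    ring
  have hp_small : ∀ i, ‖p i - p (i + 1)‖ < δ := fun i => by
    rw [hp_step, div_lt_iff₀ hN0]
    rw [div_lt_iff₀ hδ] at hN
    linarith
  have hsum : f x - f y = ∑ i ∈ Finset.range N, (f (p i) - f (p (i + 1))) := by
    rw [Finset.sum_range_sub' (fun i => f (p i))]
    simp [p, hN0.ne']
  calc ‖f x - f y‖ ≤ ∑ i ∈ Finset.range N, ‖f (p i) - f (p (i + 1))‖ := by
        rw [hsum]; exact norm_sum_le _ _
    _ ≤ ∑ _i ∈ Finset.range N, L * (‖x - y‖ / N) := Finset.sum_le_sum fun i hi => by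
        have hi := Finset.mem_range.1 hi
        rw [← hp_step i]
        exact hf _ (hp_mem i hi.le) _ (hp_mem (i + 1) hi) (hp_small i)
    _ = L * ‖x - y‖ := by
        rw [Finset.sum_const, Finset.card_range, nsmul_eq_mul]
        field_simp

theorem ContDiff.exists_norm_sub_sub_fderiv_le {E' : Type*} [NormedAddCommGroup E']
    [NormedSpace ℝ E'] {F : E → E'} (hF : ContDiff ℝ 1 F) {s : Set E} (hs : IsCompact s)
    (hs' : Convex ℝ s) {η : ℝ} (hη : 0 < η) :
    ∃ δ > 0, ∀ p ∈ s, ∀ q ∈ s, ‖p - q‖ < δ →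
      ‖F p - F q - fderiv ℝ F p (p - q)‖ ≤ η * ‖p - q‖ := by
  obtain ⟨δ, hδ, hUC⟩ := Metric.uniformContinuousOn_iff.1
    (hs.uniformContinuousOn_of_continuous (hF.continuous_fderiv one_ne_zero).continuousOn) η hη
  refine ⟨δ, hδ, fun p hp q hq hpq => ?_⟩
  have hseg : segment ℝ q p ⊆ s := hs'.segment_subset hq hp
  have h := (convex_segment q p).norm_image_sub_le_of_norm_fderiv_le'
    (fun ξ _ => (hF.differentiable one_ne_zero).differentiableAt) (fun ξ hξ => ?_)
    (left_mem_segment ℝ q p) (right_mem_segment ℝ q p) (φ := fderiv ℝ F p) (C := η)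
  · exact h
  have hξp := (mem_closedBall.1 (segment_subset_closedBall_right q p hξ)).trans_lt
    (by rwa [dist_eq_norm'])
  rw [← dist_eq_norm]
  exact (hUC ξ (hseg hξ) p (hseg (right_mem_segment ℝ q p)) hξp).le

structure IsForwardFlow (F : E → E) (φ : ℝ → E → E) : Prop where
  zero : ∀ x, φ 0 x = x
  hasDerivAt : ∀ x, ∀ t ≥ (0 : ℝ), HasDerivAt (fun u => φ u x) (F (φ t x)) t

structure IsLinearizedFlow (F : E → E) (φ : ℝ → E → E) (Ψ : E → ℝ → E → E) : Prop where
  zero : ∀ x z, Ψ x 0 z = z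
  hasDerivAt : ∀ x z, ∀ t ≥ (0 : ℝ),
    HasDerivAt (fun u => Ψ x u z) (fderiv ℝ F (φ t x) (Ψ x t z)) t

variable {F : E → E} {φ : ℝ → E → E} {Ψ : E → ℝ → E → E} {K : ℝ≥0}

namespace IsForwardFlow

theorem norm_sub_le (hφ : IsForwardFlow F φ) (hK : LipschitzWith K F) (a b : E) {u t : ℝ}
    (hu : 0 ≤ u) (hut : u ≤ t) : ‖φ u a - φ u b‖ ≤ ‖a - b‖ * exp (K * t) := by
  have h := norm_le_of_norm_deriv_le_mul_add (f := fun u => φ u a - φ u b) (δ := ‖a - b‖)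
    K.coe_nonneg le_rfl hu (fun v hv => (hφ.hasDerivAt a v hv.1).sub (hφ.hasDerivAt b v hv.1))
    (by simp [hφ.zero]) (fun v _ => by simpa using hK.norm_sub_le (φ v a) (φ v b))
  simp only [zero_mul, add_zero] at h
  exact h.trans <| mul_le_mul_of_nonneg_left
    (exp_le_exp.2 (mul_le_mul_of_nonneg_left hut K.coe_nonneg)) (norm_nonneg _)

theorem exists_norm_le (hφ : IsForwardFlow F φ) (hK : LipschitzWith K F) (x : E) (ρ t : ℝ) :
    ∃ R, ∀ a ∈ closedBall x ρ, ∀ u ∈ Icc 0 t, ‖φ u a‖ ≤ R := by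
  obtain ⟨R, hR⟩ := isCompact_Icc.exists_bound_of_continuousOn
    fun u (hu : u ∈ Icc 0 t) => (hφ.hasDerivAt x u hu.1).continuousAt.continuousWithinAt
  refine ⟨R + ρ * exp (K * t), fun a ha u hu => ?_⟩
  rw [mem_closedBall, dist_eq_norm] at ha
  calc ‖φ u a‖ ≤ ‖φ u x‖ + ‖φ u a - φ u x‖ := norm_le_norm_add_norm_sub' _ _
    _ ≤ R + ‖a - x‖ * exp (K * t) := add_le_add (hR u hu) (hφ.norm_sub_le hK a x hu.1 hu.2)
    _ ≤ R + ρ * exp (K * t) := by gcongr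

end IsForwardFlow

namespace IsLinearizedFlow

theorem norm_sub_sub_le (hΨ : IsLinearizedFlow F φ Ψ) (hφ : IsForwardFlow F φ)
    (hK : LipschitzWith K F) {a b : E} {t η : ℝ} (ht : 0 ≤ t) (hη : 0 ≤ η)
    (hclose : ∀ u ∈ Ico 0 t, ‖F (φ u a) - F (φ u b) - fderiv ℝ F (φ u a) (φ u a - φ u b)‖ ≤
      η * ‖φ u a - φ u b‖) :
    ‖φ t a - φ t b - Ψ a t (a - b)‖ ≤ η * (t * exp (2 * (K * t))) * ‖a - b‖ := by
  have h := norm_le_of_norm_deriv_le_mul_add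
    (f := fun u => φ u a - φ u b - Ψ a u (a - b)) (δ := 0) (ε := η * (‖a - b‖ * exp (K * t)))
    K.coe_nonneg (by positivity) ht
    (fun u hu => ((hφ.hasDerivAt a u hu.1).sub (hφ.hasDerivAt b u hu.1)).sub
      (hΨ.hasDerivAt a (a - b) u hu.1))
    (by simp [hφ.zero, hΨ.zero]) (fun u hu => ?_)
  · calc _ ≤ _ := h
      _ = _ := by rw [two_mul, exp_add]; ring
  set L := fderiv ℝ F (φ u a)
  have hsplit : F (φ u a) - F (φ u b) - L (Ψ a u (a - b)) =
      (F (φ u a) - F (φ u b) - L (φ u a - φ u b)) + L (φ u a - φ u b - Ψ a u (a - b)) := by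
    rw [map_sub L (φ u a - φ u b)]; abel
  rw [hsplit]
  calc _ ≤ η * ‖φ u a - φ u b‖ + (K : ℝ) * ‖φ u a - φ u b - Ψ a u (a - b)‖ :=
        (norm_add_le _ _).trans (add_le_add (hclose u hu)
          (L.le_of_opNorm_le (norm_fderiv_le_of_lipschitz ℝ hK) _))
    _ ≤ _ := by
        have := mul_le_mul_of_nonneg_left (hφ.norm_sub_le hK a b hu.1 hu.2.le) hη
        linarith

theorem exists_norm_flow_sub_le [ProperSpace E] (hΨ : IsLinearizedFlow F φ Ψ)
    (hφ : IsForwardFlow F φ) (hF : ContDiff ℝ 1 F) (hK : LipschitzWith K F) {x y : E}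
    {t lam η : ℝ} (ht : 0 ≤ t) (hη : 0 < η)
    (hstab : ∀ a ∈ segment ℝ x y, ∀ z, ‖Ψ a t z‖ ≤ lam * ‖z‖) :
    ∃ δ > 0, ∀ a ∈ segment ℝ x y, ∀ b ∈ segment ℝ x y, ‖a - b‖ < δ →
      ‖φ t a - φ t b‖ ≤ (lam + η * (t * exp (2 * (K * t)))) * ‖a - b‖ := by
  obtain ⟨R, hR⟩ := hφ.exists_norm_le hK x (dist x y) t
  have hR' : ∀ a ∈ segment ℝ x y, ∀ u ∈ Icc 0 t, φ u a ∈ closedBall 0 R := fun a ha u hu =>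
    mem_closedBall_zero_iff.2 (hR a (segment_subset_closedBall_left x y ha) u hu)
  obtain ⟨δ, hδ, hdiff⟩ := hF.exists_norm_sub_sub_fderiv_le (isCompact_closedBall 0 R)
    (convex_closedBall 0 R) hη
  refine ⟨δ / exp (K * t), by positivity, fun a ha b hb hab => ?_⟩
  have hclose : ∀ u ∈ Ico 0 t, ‖F (φ u a) - F (φ u b) - fderiv ℝ F (φ u a) (φ u a - φ u b)‖ ≤
      η * ‖φ u a - φ u b‖ := fun u hu =>
    hdiff _ (hR' a ha u (Ico_subset_Icc_self hu)) _ (hR' b hb u (Ico_subset_Icc_self hu))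
      ((hφ.norm_sub_le hK a b hu.1 hu.2.le).trans_lt ((lt_div_iff₀ (exp_pos _)).1 hab))
  calc ‖φ t a - φ t b‖ ≤ ‖Ψ a t (a - b)‖ + ‖φ t a - φ t b - Ψ a t (a - b)‖ :=
        norm_le_norm_add_norm_sub' _ _
    _ ≤ lam * ‖a - b‖ + η * (t * exp (2 * (K * t))) * ‖a - b‖ :=
        add_le_add (hstab a ha _) (hΨ.norm_sub_sub_le hφ hK ht hη.le hclose)
    _ = _ := by ring

theorem norm_flow_sub_le [ProperSpace E] (hΨ : IsLinearizedFlow F φ Ψ)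
    (hφ : IsForwardFlow F φ) (hF : ContDiff ℝ 1 F) (hK : LipschitzWith K F) {x y : E}
    {t lam : ℝ} (ht : 0 ≤ t) (hstab : ∀ a ∈ segment ℝ x y, ∀ z, ‖Ψ a t z‖ ≤ lam * ‖z‖) :
    ‖φ t x - φ t y‖ ≤ lam * ‖x - y‖ := by
  refine le_of_forall_pos_le_add fun ε hε => ?_
  set c := t * exp (2 * (K * t))
  set d := ‖x - y‖
  have hc : 0 ≤ c := by positivity
  set η := ε / ((c + 1) * (d + 1))
  have hη : 0 < η := by positivity
  obtain ⟨δ, hδ, hloc⟩ := hΨ.exists_norm_flow_sub_le hφ hF hK ht hη hstab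
  have hηc : η * c * d ≤ ε := calc
    η * c * d ≤ η * ((c + 1) * (d + 1)) := by nlinarith [norm_nonneg (x - y)]
    _ = ε := div_mul_cancel₀ _ (by positivity)
  calc ‖φ t x - φ t y‖ ≤ (lam + η * c) * d :=
        norm_sub_le_of_forall_norm_sub_le_on_segment hδ hloc
    _ ≤ lam * d + ε := by linarith

end IsLinearizedFlow

theorem stmt_0_general (n : ℕ) (F : (Fin n → ℝ) → (Fin n → ℝ)) (r : ℝ)
    (hF : ContDiff ℝ 1 F)
    (hdFb : ∀ z, ‖fderiv ℝ F z‖ ≤ r)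
    (φ : ℝ → (Fin n → ℝ) → (Fin n → ℝ))
    (hφ0 : ∀ x, φ 0 x = x)
    (hφ : ∀ x, ∀ t ≥ (0:ℝ), HasDerivAt (fun u => φ u x) (F (φ t x)) t)
    (C : Set (Fin n → ℝ))
    (Ψ : (Fin n → ℝ) → ℝ → (Fin n → ℝ) → (Fin n → ℝ))
    (hΨ0 : ∀ x z, Ψ x 0 z = z)
    (hΨ : ∀ x z, ∀ t ≥ (0:ℝ),
      HasDerivAt (fun u => Ψ x u z) (fderiv ℝ F (φ t x) (Ψ x t z)) t)
    (lam : ℝ)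
    (hstab : ∀ x ∈ C, ∀ z : Fin n → ℝ, ∀ t ≥ (0:ℝ), ‖Ψ x t z‖ ≤ lam * ‖z‖) :
    ∀ x ∈ C, ∀ y ∈ C, segment ℝ x y ⊆ C →
      ∀ t ≥ (0:ℝ), ‖φ t x - φ t y‖ ≤ lam * ‖x - y‖ := by
  intro x _ y _ hseg t ht
  have hr : 0 ≤ r := (norm_nonneg _).trans (hdFb 0)
  have hK : LipschitzWith r.toNNReal F :=
    lipschitzWith_of_nnnorm_fderiv_le (hF.differentiable one_ne_zero) fun z =>
      (Real.le_toNNReal_iff_coe_le hr).2 (hdFb z)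
  exact IsLinearizedFlow.norm_flow_sub_le ⟨hΨ0, hΨ⟩ ⟨hφ0, hφ⟩ hF hK ht
    fun a ha z => hstab a (hseg ha) z t ht

/-- If the linearized system along every trajectory starting in the
positively invariant open set `C` is linearly `C`-positive stable with constant `λ`,
then the nonlinear system is `C`-positive stable with the same constant. -/
theorem stmt_0 (n : ℕ) (F : (Fin n → ℝ) → (Fin n → ℝ)) (r : ℝ)
    (hF : ContDiff ℝ 1 F)
    (hFb : ∀ z, ‖F z‖ ≤ r) (hdFb : ∀ z, ‖fderiv ℝ F z‖ ≤ r)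
    (φ : ℝ → (Fin n → ℝ) → (Fin n → ℝ))
    (hφ0 : ∀ x, φ 0 x = x)
    (hφ : ∀ x, ∀ t ≥ (0:ℝ), HasDerivAt (fun u => φ u x) (F (φ t x)) t)
    (C : Set (Fin n → ℝ)) (hC : IsOpen C)
    (hCinv : ∀ t ≥ (0:ℝ), φ t '' C ⊆ C)
    (Ψ : (Fin n → ℝ) → ℝ → (Fin n → ℝ) → (Fin n → ℝ))
    (hΨ0 : ∀ x z, Ψ x 0 z = z)
    (hΨ : ∀ x z, ∀ t ≥ (0:ℝ),
      HasDerivAt (fun u => Ψ x u z) (fderiv ℝ F (φ t x) (Ψ x t z)) t)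
    (lam : ℝ) (hlam : 0 < lam)
    (hstab : ∀ x ∈ C, ∀ z : Fin n → ℝ, ∀ t ≥ (0:ℝ), ‖Ψ x t z‖ ≤ lam * ‖z‖) :
    ∀ x ∈ C, ∀ y ∈ C, segment ℝ x y ⊆ C →
      ∀ t ≥ (0:ℝ), ‖φ t x - φ t y‖ ≤ lam * ‖x - y‖ :=
  stmt_0_general n F r hF hdFb φ hφ0 hφ C Ψ hΨ0 hΨ lam hstab
end

section
/- Let φᵗ be the flow of ẋ = F(x), F = (f₁,…,fₙ) C¹ with uniformly bounded F and dF (bound r). Suppose C ⊆ ℝⁿ is open, φᵗ-positive invariant, and there exists α > 0 with fᵢ(φᵗ(x)) ≥ α for all x ∈ C, t ≥ 0, i. Let Ψₓᵗ denote the flow of the linearization ẏ = dF(φᵗ(x))y. If the positive cone V₊ = {z ∈ ℝⁿ : zᵢ ≥ 0 ∀i} is Ψ_C-positive invariant with control time δ ≥ 0 (i.e. for each x ∈ C there is tₓ ∈ [0,δ] with Ψₓ^{t−tₓ}(V₊) ⊆ V₊ for all t ≥ tₓ), then the system is C-positive stable with constant λ = (r/α)·exp(rδ). -/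
/-!
The derivative of `φᵗ` at `x` is the linearized flow `Ψₓ(0, t)`, so by the mean value inequality
on a ball inside `C` it suffices to bound `‖Ψₓ(0, t)‖` by `(r/α)·exp(rδ)`. Up to the control time
`tₓ ≤ δ`, Grönwall gives `‖Ψₓ(0, t)‖ ≤ exp(rδ)`. After it, `Ψₓ(tₓ, t)` preserves the positive
cone, hence is monotone for the componentwise order; since
`-(‖z‖/α)·F(φ^{tₓ}x) ≤ z ≤ (‖z‖/α)·F(φ^{tₓ}x)` and `Ψₓ(tₓ, t)` maps `F(φ^{tₓ}x)` to `F(φᵗx)`,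
whose norm is at most `r`, we get `‖Ψₓ(tₓ, t) z‖ ≤ (r/α)‖z‖`.
-/

open Set Metric Real
open scoped NNReal

structure IsEvolution {E : Type*} [NormedAddCommGroup E] [NormedSpace ℝ E]
    (A : ℝ → E →L[ℝ] E) (Ψ : ℝ → ℝ → E → E) : Prop where
  apply_self : ∀ s z, Ψ s s z = z
  hasDerivAt : ∀ s z t, HasDerivAt (fun u => Ψ s u z) (A t (Ψ s t z)) t

namespace IsEvolution

variable {E : Type*} [NormedAddCommGroup E] [NormedSpace ℝ E]
  {A : ℝ → E →L[ℝ] E} {Ψ : ℝ → ℝ → E → E} {K : ℝ≥0} {s t : ℝ}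

theorem eq_of_hasDerivAt (hΨ : IsEvolution A Ψ) (hA : ∀ t, ‖A t‖ ≤ K) {f : ℝ → E} (hst : s ≤ t)
    (hf : ∀ u ∈ Icc s t, HasDerivAt f (A u (f u)) u) : f t = Ψ s t (f s) := by
  have hlip (u : ℝ) : LipschitzWith K (A u) :=
    (A u).lipschitz.weaken (by exact_mod_cast hA u)
  refine ODE_solution_unique hlip (fun u hu => (hf u hu).continuousAt.continuousWithinAt)
    (fun u hu => (hf u (Ico_subset_Icc_self hu)).hasDerivWithinAt)
    (fun u _ => (hΨ.hasDerivAt s (f s) u).continuousAt.continuousWithinAt)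
    (fun u _ => (hΨ.hasDerivAt s (f s) u).hasDerivWithinAt) (hΨ.apply_self s _).symm
    ⟨hst, le_rfl⟩

theorem map_add (hΨ : IsEvolution A Ψ) (hA : ∀ t, ‖A t‖ ≤ K) (hst : s ≤ t) (z₁ z₂ : E) :
    Ψ s t (z₁ + z₂) = Ψ s t z₁ + Ψ s t z₂ := by
  have h := hΨ.eq_of_hasDerivAt hA hst (f := fun u => Ψ s u z₁ + Ψ s u z₂) fun u _ => by
    simpa using (hΨ.hasDerivAt s z₁ u).fun_add (hΨ.hasDerivAt s z₂ u)
  simpa [hΨ.apply_self] using h.symm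

theorem map_smul (hΨ : IsEvolution A Ψ) (hA : ∀ t, ‖A t‖ ≤ K) (hst : s ≤ t) (c : ℝ) (z : E) :
    Ψ s t (c • z) = c • Ψ s t z := by
  have h := hΨ.eq_of_hasDerivAt hA hst (f := fun u => c • Ψ s u z) fun u _ => by
    simpa using (hΨ.hasDerivAt s z u).fun_const_smul c
  simpa [hΨ.apply_self] using h.symm

theorem apply_apply (hΨ : IsEvolution A Ψ) (hA : ∀ t, ‖A t‖ ≤ K) {r : ℝ} (hst : s ≤ t) (z : E) :
    Ψ s t (Ψ r s z) = Ψ r t z :=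
  (hΨ.eq_of_hasDerivAt hA hst fun u _ => hΨ.hasDerivAt r z u).symm

theorem norm_apply_le (hΨ : IsEvolution A Ψ) (hA : ∀ t, ‖A t‖ ≤ K) (hst : s ≤ t) (z : E) :
    ‖Ψ s t z‖ ≤ exp (K * (t - s)) * ‖z‖ := by
  have h := norm_le_gronwallBound_of_norm_deriv_right_le (ε := 0)
    (fun u _ => (hΨ.hasDerivAt s z u).continuousAt.continuousWithinAt)
    (fun u _ => (hΨ.hasDerivAt s z u).hasDerivWithinAt) (by rw [hΨ.apply_self])
    (fun u _ => by simpa using (A u).le_of_opNorm_le (hA u) _) t ⟨hst, le_rfl⟩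
  rwa [gronwallBound_ε0, mul_comm] at h

noncomputable def clm (hΨ : IsEvolution A Ψ) (hA : ∀ t, ‖A t‖ ≤ K) (hst : s ≤ t) : E →L[ℝ] E :=
  LinearMap.mkContinuous
    { toFun := Ψ s t
      map_add' := hΨ.map_add hA hst
      map_smul' := hΨ.map_smul hA hst }
    (exp (K * (t - s))) (hΨ.norm_apply_le hA hst)

@[simp]
theorem clm_apply (hΨ : IsEvolution A Ψ) (hA : ∀ t, ‖A t‖ ≤ K) (hst : s ≤ t) (z : E) :
    hΨ.clm hA hst z = Ψ s t z := rfl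

end IsEvolution

theorem norm_apply_le_of_nonneg_apply {ι : Type*} [Fintype ι] (L : (ι → ℝ) →ₗ[ℝ] ι → ℝ)
    (hL : ∀ z, 0 ≤ z → 0 ≤ L z) {e : ι → ℝ} {α : ℝ} (hα : 0 < α) (he : ∀ i, α ≤ e i)
    (z : ι → ℝ) : ‖L z‖ ≤ ‖z‖ / α * ‖L e‖ := by
  set c := ‖z‖ / α
  have hc : 0 ≤ c := by positivity
  have hz (i : ι) : |z i| ≤ c * e i := calc
    |z i| ≤ ‖z‖ := norm_le_pi_norm z i
    _ = c * α := (div_mul_cancel₀ _ hα.ne').symm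
    _ ≤ c * e i := by gcongr; exact he i
  have hupper := hL (c • e - z) fun i => by
    simp only [Pi.zero_apply, Pi.sub_apply, Pi.smul_apply, smul_eq_mul]
    linarith [le_abs_self (z i), hz i]
  have hlower := hL (c • e + z) fun i => by
    simp only [Pi.zero_apply, Pi.add_apply, Pi.smul_apply, smul_eq_mul]
    linarith [neg_abs_le (z i), hz i]
  refine (pi_norm_le_iff_of_nonneg (by positivity)).2 fun i => ?_
  have h₁ := hupper i
  have h₂ := hlower i
  simp only [map_sub, map_add, map_smul, Pi.zero_apply, Pi.sub_apply, Pi.add_apply,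
    Pi.smul_apply, smul_eq_mul] at h₁ h₂
  have hLe : c * L e i ≤ c * ‖L e‖ :=
    mul_le_mul_of_nonneg_left ((le_abs_self _).trans (norm_le_pi_norm (L e) i)) hc
  rw [Real.norm_eq_abs, abs_le]
  constructor <;> linarith

theorem IsEvolution.norm_apply_le_of_eventually_nonneg {ι : Type*} [Fintype ι]
    {A : ℝ → (ι → ℝ) →L[ℝ] ι → ℝ} {Ψ : ℝ → ℝ → (ι → ℝ) → ι → ℝ} {K : ℝ≥0}
    (hΨ : IsEvolution A Ψ) (hA : ∀ t, ‖A t‖ ≤ K) {e : ℝ → ι → ℝ} {α δ s t : ℝ}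
    (hα : 0 < α) (hs : s ∈ Icc 0 δ) (hΨe : ∀ t ≥ s, Ψ s t (e s) = e t)
    (heα : ∀ i, α ≤ e s i) (heK : ∀ t, ‖e t‖ ≤ K)
    (hΨpos : ∀ t ≥ s, ∀ z, 0 ≤ z → 0 ≤ Ψ s t z) (ht : 0 ≤ t) (z : ι → ℝ) :
    ‖Ψ 0 t z‖ ≤ K / α * exp (K * δ) * ‖z‖ := by
  have hgrowth : ∀ u ∈ Icc 0 δ, ‖Ψ 0 u z‖ ≤ exp (K * δ) * ‖z‖ := fun u hu =>
    (hΨ.norm_apply_le hA hu.1 z).trans (by gcongr; linarith [hu.2])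
  rcases isEmpty_or_nonempty ι with hι | ⟨⟨i⟩⟩
  · simp only [Subsingleton.elim (Ψ 0 t z) 0, norm_zero]
    positivity
  rcases le_total t s with hts | hst
  · have hαK : 1 ≤ K / α := (one_le_div hα).2 <| calc
      α ≤ e s i := heα i
      _ ≤ ‖e s‖ := (le_abs_self _).trans (norm_le_pi_norm (e s) i)
      _ ≤ K := heK s
    calc ‖Ψ 0 t z‖ ≤ exp (K * δ) * ‖z‖ := hgrowth t ⟨ht, hts.trans hs.2⟩
      _ ≤ K / α * exp (K * δ) * ‖z‖ := by
        rw [mul_assoc]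
        exact le_mul_of_one_le_left (by positivity) hαK
  · calc ‖Ψ 0 t z‖ = ‖hΨ.clm hA hst (Ψ 0 s z)‖ := by
          rw [hΨ.clm_apply, hΨ.apply_apply hA hst]
      _ ≤ ‖Ψ 0 s z‖ / α * ‖hΨ.clm hA hst (e s)‖ :=
        norm_apply_le_of_nonneg_apply (hΨ.clm hA hst).toLinearMap (hΨpos t hst) hα heα _
      _ ≤ exp (K * δ) * ‖z‖ / α * K := by
        rw [hΨ.clm_apply, hΨe t hst]
        gcongr
        exacts [hgrowth s hs, heK t]
      _ = K / α * exp (K * δ) * ‖z‖ := by ring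

theorem gronwallBound_zero_eq_mul (K ε x : ℝ) :
    gronwallBound 0 K ε x = ε * gronwallBound 0 K 1 x := by
  unfold gronwallBound
  split_ifs <;> ring

theorem IsCompact.exists_forall_norm_sub_sub_fderiv_le {E G : Type*} [NormedAddCommGroup E]
    [NormedSpace ℝ E] [NormedAddCommGroup G] [NormedSpace ℝ G] {F : E → G} {S : Set E}
    (hS : IsCompact S) (hF : ContDiff ℝ 1 F) {ε : ℝ} (hε : 0 < ε) :
    ∃ ρ > 0, ∀ p ∈ S, ∀ q, ‖q - p‖ < ρ →
      ‖F q - F p - fderiv ℝ F p (q - p)‖ ≤ ε * ‖q - p‖ := by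
  obtain ⟨ρ, hρ, hclose⟩ := mem_uniformity_dist.1 <|
    hS.uniformContinuousAt_of_continuousAt (fderiv ℝ F)
      (fun p _ => (hF.continuous_fderiv one_ne_zero).continuousAt) (dist_mem_uniformity hε)
  refine ⟨ρ, hρ, fun p hp q hq => ?_⟩
  have hball (ξ : E) (hξ : ξ ∈ ball p ρ) : ‖fderiv ℝ F ξ - fderiv ℝ F p‖ ≤ ε := by
    rw [← dist_eq_norm, dist_comm]
    exact (hclose (mem_ball'.1 hξ) hp).le
  exact (convex_ball p ρ).norm_image_sub_le_of_norm_hasFDerivWithin_le'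
    (fun ξ _ => (hF.differentiable one_ne_zero ξ).hasFDerivAt.hasFDerivWithinAt) hball
    (mem_ball_self hρ) (by rwa [mem_ball, dist_eq_norm])

section Flow

variable {E : Type*} [NormedAddCommGroup E] [NormedSpace ℝ E] {F : E → E} {K : ℝ≥0}
  {φ : ℝ → E → E} {Ψ : ℝ → ℝ → E → E} {x : E}

theorem norm_flow_sub_le (hF : Differentiable ℝ F) (hdF : ∀ z, ‖fderiv ℝ F z‖ ≤ K)
    (hφ0 : ∀ x, φ 0 x = x) (hφ : ∀ x, ∀ t ≥ (0:ℝ), HasDerivAt (fun u => φ u x) (F (φ t x)) t)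
    (x y : E) {t : ℝ} (ht : 0 ≤ t) : ‖φ t y - φ t x‖ ≤ ‖y - x‖ * exp (K * t) := by
  have hlip : LipschitzWith K F :=
    lipschitzWith_of_nnnorm_fderiv_le hF fun z => by exact_mod_cast hdF z
  have h := dist_le_of_trajectories_ODE (v := fun _ => F) (fun _ => hlip)
    (fun u hu => (hφ y u hu.1).continuousAt.continuousWithinAt)
    (fun u hu => (hφ y u hu.1).hasDerivWithinAt)
    (fun u hu => (hφ x u hu.1).continuousAt.continuousWithinAt)
    (fun u hu => (hφ x u hu.1).hasDerivWithinAt) (by rw [hφ0, hφ0]) t ⟨ht, le_rfl⟩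
  simpa [dist_eq_norm] using h

namespace IsEvolution

theorem apply_vectorField (hΨ : IsEvolution (fun t => fderiv ℝ F (φ t x)) Ψ)
    (hdF : ∀ z, ‖fderiv ℝ F z‖ ≤ K) (hF : Differentiable ℝ F)
    (hφ : ∀ t ≥ (0:ℝ), HasDerivAt (fun u => φ u x) (F (φ t x)) t) {s t : ℝ} (hs : 0 ≤ s)
    (hst : s ≤ t) : Ψ s t (F (φ s x)) = F (φ t x) :=
  (hΨ.eq_of_hasDerivAt (fun _ => hdF _) hst fun u hu =>
    (hF (φ u x)).hasFDerivAt.comp_hasDerivAt u (hφ u (hs.trans hu.1))).symm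

theorem norm_flow_sub_sub_le (hΨ : IsEvolution (fun t => fderiv ℝ F (φ t x)) Ψ)
    (hdF : ∀ z, ‖fderiv ℝ F z‖ ≤ K) (hφ0 : ∀ x, φ 0 x = x)
    (hφ : ∀ x, ∀ t ≥ (0:ℝ), HasDerivAt (fun u => φ u x) (F (φ t x)) t) (y : E) {T η : ℝ}
    (hT : 0 ≤ T)
    (hη : ∀ s ∈ Icc 0 T, ‖F (φ s y) - F (φ s x) - fderiv ℝ F (φ s x) (φ s y - φ s x)‖ ≤ η) :
    ‖φ T y - φ T x - Ψ 0 T (y - x)‖ ≤ gronwallBound 0 K η T := by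
  have hlip (u : ℝ) : LipschitzWith K (fderiv ℝ F (φ u x)) :=
    (fderiv ℝ F (φ u x)).lipschitz.weaken (by exact_mod_cast hdF _)
  have hdiff (u : ℝ) (hu : u ∈ Icc 0 T) :
      HasDerivAt (fun u => φ u y - φ u x) (F (φ u y) - F (φ u x)) u :=
    (hφ y u hu.1).sub (hφ x u hu.1)
  have h := dist_le_of_approx_trajectories_ODE (v := fun u => fderiv ℝ F (φ u x)) (εg := 0)
    hlip (fun u hu => (hdiff u hu).continuousAt.continuousWithinAt)
    (fun u hu => (hdiff u (Ico_subset_Icc_self hu)).hasDerivWithinAt)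
    (fun u hu => by rw [dist_eq_norm]; exact hη u (Ico_subset_Icc_self hu))
    (fun u _ => (hΨ.hasDerivAt 0 (y - x) u).continuousAt.continuousWithinAt)
    (fun u _ => (hΨ.hasDerivAt 0 (y - x) u).hasDerivWithinAt) (fun _ _ => (dist_self _).le)
    (by rw [hφ0, hφ0, hΨ.apply_self, dist_self]) T ⟨hT, le_rfl⟩
  simpa [dist_eq_norm] using h

theorem hasFDerivAt_flow (hΨ : IsEvolution (fun t => fderiv ℝ F (φ t x)) Ψ)
    (hdF : ∀ z, ‖fderiv ℝ F z‖ ≤ K) (hF : ContDiff ℝ 1 F) (hφ0 : ∀ x, φ 0 x = x)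
    (hφ : ∀ x, ∀ t ≥ (0:ℝ), HasDerivAt (fun u => φ u x) (F (φ t x)) t) {T : ℝ} (hT : 0 ≤ T) :
    HasFDerivAt (φ T) (hΨ.clm (fun _ => hdF _) hT) x := by
  refine HasFDerivAt.of_isLittleO (Asymptotics.isLittleO_iff.2 fun ε hε => ?_)
  set G := gronwallBound 0 K 1 T
  set ε' := ε / (exp (K * T) * (|G| + 1))
  have hS : IsCompact ((fun s => φ s x) '' Icc 0 T) :=
    isCompact_Icc.image_of_continuousOn fun s hs =>
      (hφ x s hs.1).continuousAt.continuousWithinAt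
  obtain ⟨ρ, hρ, hrem⟩ := hS.exists_forall_norm_sub_sub_fderiv_le hF (ε := ε') (by positivity)
  filter_upwards [ball_mem_nhds x (div_pos hρ (exp_pos (K * T)))] with y hy
  rw [mem_ball, dist_eq_norm, lt_div_iff₀ (exp_pos _)] at hy
  have hnear (s : ℝ) (hs : s ∈ Icc 0 T) : ‖φ s y - φ s x‖ ≤ ‖y - x‖ * exp (K * T) :=
    (norm_flow_sub_le (hF.differentiable one_ne_zero) hdF hφ0 hφ x y hs.1).trans
      (by gcongr; exact hs.2)
  calc ‖φ T y - φ T x - hΨ.clm (fun _ => hdF _) hT (y - x)‖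
      ≤ gronwallBound 0 K (ε' * (‖y - x‖ * exp (K * T))) T :=
        hΨ.norm_flow_sub_sub_le hdF hφ0 hφ y hT fun s hs =>
          (hrem _ (mem_image_of_mem _ hs) _ ((hnear s hs).trans_lt hy)).trans
            (by gcongr; exact hnear s hs)
    _ = ε' * (‖y - x‖ * exp (K * T)) * G := gronwallBound_zero_eq_mul _ _ _
    _ ≤ ε' * (‖y - x‖ * exp (K * T)) * (|G| + 1) := by
        gcongr; linarith [le_abs_self G]
    _ = ε * ‖y - x‖ := by
        simp only [ε']
        field_simp

end IsEvolution

end Flow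

theorem stmt_1_general (n : ℕ) (F : (Fin n → ℝ) → (Fin n → ℝ)) (r : ℝ)
    (hF : ContDiff ℝ 1 F)
    (hFb : ∀ z, ‖F z‖ ≤ r) (hdFb : ∀ z, ‖fderiv ℝ F z‖ ≤ r)
    (φ : ℝ → (Fin n → ℝ) → (Fin n → ℝ))
    (hφ0 : ∀ x, φ 0 x = x)
    (hφ : ∀ x, ∀ t ≥ (0:ℝ), HasDerivAt (fun u => φ u x) (F (φ t x)) t)
    (C : Set (Fin n → ℝ)) (hC : IsOpen C)
    (α : ℝ) (hα : 0 < α)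
    (hFα : ∀ x ∈ C, ∀ t ≥ (0:ℝ), ∀ i, α ≤ F (φ t x) i)
    -- `Ψ x s t z` : the solution at time `t` of the linearized system
    -- `ẏ = dF(φᵗ(x))y` that equals `z` at time `s`.
    (Ψ : (Fin n → ℝ) → ℝ → ℝ → (Fin n → ℝ) → (Fin n → ℝ))
    (hΨ0 : ∀ x s z, Ψ x s s z = z)
    (hΨ : ∀ x s z, ∀ t,
      HasDerivAt (fun u => Ψ x s u z) (fderiv ℝ F (φ t x) (Ψ x s t z)) t)
    (δ : ℝ)
    (hcone : ∀ x ∈ C, ∃ tx ∈ Set.Icc 0 δ, ∀ t ≥ tx, ∀ z : Fin n → ℝ,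
      (∀ i, 0 ≤ z i) → ∀ i, 0 ≤ Ψ x tx t z i) :
    ∀ x ∈ C, ∃ ε > 0, ∀ y ∈ C, ‖x - y‖ < ε →
      ∀ t ≥ (0:ℝ), ‖φ t x - φ t y‖ ≤ (r / α * Real.exp (r * δ)) * ‖x - y‖ := by
  intro x hx
  lift r to ℝ≥0 using (norm_nonneg _).trans (hFb 0)
  have hev (w) : IsEvolution (fun t => fderiv ℝ F (φ t w)) (Ψ w) := ⟨hΨ0 w, hΨ w⟩
  have hbound (w) (hw : w ∈ C) (t : ℝ) (ht : 0 ≤ t) :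
      ‖(hev w).clm (fun _ => hdFb _) ht‖ ≤ r / α * exp (r * δ) := by
    obtain ⟨tx, htx, hpos⟩ := hcone w hw
    refine ContinuousLinearMap.opNorm_le_bound _ (by positivity) fun z => ?_
    exact (hev w).norm_apply_le_of_eventually_nonneg (e := fun t => F (φ t w))
      (fun _ => hdFb _) hα htx
      (fun t => (hev w).apply_vectorField hdFb (hF.differentiable one_ne_zero) (hφ w) htx.1)
      (hFα w hw tx htx.1) (fun _ => hFb _) hpos ht z
  obtain ⟨ε, hε, hball⟩ := isOpen_iff.1 hC x hx
  refine ⟨ε, hε, fun y _ hxy t ht => ?_⟩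
  exact (convex_ball x ε).norm_image_sub_le_of_norm_hasFDerivWithin_le
    (fun w _ => ((hev w).hasFDerivAt_flow hdFb hF hφ0 hφ ht).hasFDerivWithinAt)
    (fun w hw => hbound w (hball hw) t ht) (by rwa [mem_ball, dist_eq_norm, norm_sub_rev])
    (mem_ball_self hε)

/-- if the positive cone `V₊` is `Ψ_C`-positive invariant with control
time `δ`, and all components of `F` along trajectories in `C` are bounded below by
`α > 0`, then the system is `C`-positive stable with constant `(r/α)·exp(rδ)`. -/
theorem stmt_1 (n : ℕ) (F : (Fin n → ℝ) → (Fin n → ℝ)) (r : ℝ)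
    (hF : ContDiff ℝ 1 F)
    (hFb : ∀ z, ‖F z‖ ≤ r) (hdFb : ∀ z, ‖fderiv ℝ F z‖ ≤ r)
    (φ : ℝ → (Fin n → ℝ) → (Fin n → ℝ))
    (hφ0 : ∀ x, φ 0 x = x)
    (hφ : ∀ x, ∀ t ≥ (0:ℝ), HasDerivAt (fun u => φ u x) (F (φ t x)) t)
    (C : Set (Fin n → ℝ)) (hC : IsOpen C)
    (hCinv : ∀ t ≥ (0:ℝ), φ t '' C ⊆ C)
    (α : ℝ) (hα : 0 < α)
    (hFα : ∀ x ∈ C, ∀ t ≥ (0:ℝ), ∀ i, α ≤ F (φ t x) i)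
    -- `Ψ x s t z` : the solution at time `t` of the linearized system
    -- `ẏ = dF(φᵗ(x))y` that equals `z` at time `s`.
    (Ψ : (Fin n → ℝ) → ℝ → ℝ → (Fin n → ℝ) → (Fin n → ℝ))
    (hΨ0 : ∀ x s z, Ψ x s s z = z)
    (hΨ : ∀ x s z, ∀ t,
      HasDerivAt (fun u => Ψ x s u z) (fderiv ℝ F (φ t x) (Ψ x s t z)) t)
    (δ : ℝ) (hδ : 0 ≤ δ)
    (hcone : ∀ x ∈ C, ∃ tx ∈ Set.Icc 0 δ, ∀ t ≥ tx, ∀ z : Fin n → ℝ,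
      (∀ i, 0 ≤ z i) → ∀ i, 0 ≤ Ψ x tx t z i) :
    ∀ x ∈ C, ∃ ε > 0, ∀ y ∈ C, ‖x - y‖ < ε →
      ∀ t ≥ (0:ℝ), ‖φ t x - φ t y‖ ≤ (r / α * Real.exp (r * δ)) * ‖x - y‖ :=
  stmt_1_general n F r hF hFb hdFb φ hφ0 hφ C hC α hα hFα Ψ hΨ0 hΨ δ hcone
end

section
/- Consider the linear system ẏ = A(x,t)y, t ≥ t₀, where A(x,t) = (a_{i,j}(x,t)) is continuous in (x,t) for x ∈ C. Suppose there exist continuous 1-periodic functions p, β : ℝ → ℝ with β > 0 such that for all t ≥ t₀, x ∈ C and all indices i,j,k,l: p(t) − a_{i,j}(x,t) < β(t) and |a_{i,j}(x,t) − a_{k,l}(x,t)| < β(t). Suppose further there exist d > 0 and a positive 1-periodic function θ solving θ̇ = −n p(t) θ + 2 n d β(t) with θ(t) < d for all t. Then the positive orthant V₊ is Ψ^{t−t₀}_C-positive invariant with control time δ = 1: for every x ∈ C there exists tₓ ∈ [t₀, t₀+1] (a time where θ attains its maximum) such that the flow Ψₓ of the linear system satisfies Ψₓ^{t−tₓ}(V₊)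 ⊆ V₊ for all t ≥ tₓ. -/
/-!
Write `w = y - c (∑ⱼ yⱼ) 𝟙`. For `c ≥ 0` with `n c < 1` the cone `{y | c ∑ⱼ yⱼ ≤ yᵢ ∀ i}` is the
preimage of the orthant `w ≥ 0`, and it lies inside the orthant. Along a solution of `ẏ = A y`
the new variable solves a linear system `ẇ = B w`; if `ċ = p (1 - n c) - 2β`, the mean-field
bounds on the entries of `A` make every entry of `B` nonnegative, so the orthant is invariant for
`w` (a Metzler system), i.e. the moving cone is invariant for `y`.

Such a `c` is `(1 - G / d) / n`, where `G` solves the equation of `θ` with `G(tₓ) = d`. Since `G`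
and `θ` solve the same affine equation with nonnegative forcing and `θ ≤ G`, the ratio `G / θ` is
nonincreasing, so `G ≤ d θ / θ(tₓ) ≤ d` after the maximum point `tₓ` of `θ`: this gives `c ≥ 0`,
while `c(tₓ) = 0` makes the cone at time `tₓ` the orthant itself.
-/

open Set Filter Topology Matrix

theorem HasDerivAt.eventually_nhdsGT_lt {f : ℝ → ℝ} {f' x : ℝ} (hf : HasDerivAt f f' x)
    (hf' : 0 < f') : ∀ᶠ y in 𝓝[>] x, f x < f y := by
  have hslope := (hasDerivAt_iff_tendsto_slope.1 hf).mono_left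
    (nhdsWithin_mono x fun y (hy : x < y) => hy.ne')
  filter_upwards [hslope.eventually (eventually_gt_nhds hf'), self_mem_nhdsWithin]
    with y hy hxy
  exact (slope_pos_iff_of_le (le_of_lt hxy)).1 hy

theorem nonneg_on_Icc_of_deriv_pos_of_eq_zero {ι : Type*} [Fintype ι] {g g' : ℝ → ι → ℝ}
    {a b : ℝ} (hg : ∀ t ∈ Icc a b, HasDerivAt g (g' t) t) (ha : 0 ≤ g a)
    (hg' : ∀ t ∈ Ico a b, 0 ≤ g t → ∀ i, g t i = 0 → 0 < g' t i) :
    ∀ t ∈ Icc a b, 0 ≤ g t := by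
  have hcont : ContinuousOn g (Icc a b) := fun t ht => (hg t ht).continuousAt.continuousWithinAt
  refine IsClosed.Icc_subset_of_forall_mem_nhdsWithin (s := {t | 0 ≤ g t}) ?_ ha ?_
  · rw [inter_comm]
    exact hcont.preimage_isClosed_of_isClosed isClosed_Icc isClosed_Ici
  rintro t ⟨hgt, htab⟩
  change ∀ᶠ s in 𝓝[>] t, ∀ i, 0 ≤ g s i
  refine Filter.eventually_all.2 fun i => ?_
  have hgi := hasDerivAt_pi.1 (hg t (Ico_subset_Icc_self htab)) i
  rcases (hgt i).lt_or_eq with hpos | hzero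
  · exact (hgi.continuousAt.eventually (eventually_gt_nhds hpos)).filter_mono
      nhdsWithin_le_nhds |>.mono fun _ => le_of_lt
  · filter_upwards [hgi.eventually_nhdsGT_lt (hg' t htab hgt i hzero.symm)] with s hs
    exact le_of_lt (hzero.trans_lt hs)

theorem nonneg_on_Icc_of_deriv_ge_neg_mul {ι : Type*} [Fintype ι] {g g' : ℝ → ι → ℝ}
    {a b M : ℝ} (hg : ∀ t ∈ Icc a b, HasDerivAt g (g' t) t) (ha : 0 ≤ g a)
    (hg' : ∀ t ∈ Ico a b, ∀ r > 0, (∀ j, -r ≤ g t j) → ∀ i, g t i = -r → -(M * r) ≤ g' t i) :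
    ∀ t ∈ Icc a b, 0 ≤ g t := by
  intro t ht i
  refine le_of_forall_pos_le_add fun (δ : ℝ) hδ => ?_
  -- a margin that grows faster than the drift `-M r` can pull a touching coordinate down
  set ρ : ℝ → ℝ := fun s => δ * Real.exp ((M + 1) * (s - t))
  have hρ : ∀ s, HasDerivAt ρ ((M + 1) * ρ s) s := fun s =>
    ((((hasDerivAt_id s).sub_const t).const_mul (M + 1)).exp.const_mul δ).congr_deriv
      (by simp only [ρ, id]; ring)
  have hρpos : ∀ s, 0 < ρ s := fun s => mul_pos hδ (Real.exp_pos _)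
  have hpert := nonneg_on_Icc_of_deriv_pos_of_eq_zero (a := a) (b := t)
    (g := fun s j => g s j + ρ s) (g' := fun s j => g' s j + (M + 1) * ρ s)
    (fun s hs => hasDerivAt_pi.2 fun j =>
      (hasDerivAt_pi.1 (hg s ⟨hs.1, hs.2.trans ht.2⟩) j).add (hρ s))
    (fun j => add_nonneg (ha j) (hρpos a).le)
    (fun s hs hnn j hj => by
      have hdrift := hg' s ⟨hs.1, hs.2.trans_le ht.2⟩ (ρ s) (hρpos s)
        (fun k => by linarith [show 0 ≤ g s k + ρ s from hnn k]) j (by linarith [hj])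
      linarith [hρpos s])
    t ⟨ht.1, le_rfl⟩ i
  simpa [ρ] using hpert

theorem nonneg_of_hasDerivAt_mulVec_of_metzler {ι : Type*} [Fintype ι] {B : ℝ → Matrix ι ι ℝ}
    {w : ℝ → ι → ℝ} {a : ℝ} (hB : ContinuousOn B (Ici a))
    (hmetzler : ∀ t ≥ a, ∀ i j, i ≠ j → 0 ≤ B t i j)
    (hw : ∀ t ≥ a, HasDerivAt w (B t *ᵥ w t) t) (ha : 0 ≤ w a) :
    ∀ t ≥ a, 0 ≤ w t := by
  intro t ht
  have hBt : ContinuousOn (fun s => ∑ i, ∑ j, |B s i j|) (Icc a t) := by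
    have hB' : ContinuousOn B (Icc a t) := hB.mono Icc_subset_Ici_self
    fun_prop
  obtain ⟨M, hM⟩ := isCompact_Icc.bddAbove_image hBt
  refine nonneg_on_Icc_of_deriv_ge_neg_mul (M := M) (fun s hs => hw s hs.1) ha ?_ t ⟨ht, le_rfl⟩
  intro s hs r hr hge i hi
  have hrow : ∑ j, B s i j ≤ M :=
    calc ∑ j, B s i j ≤ ∑ j, |B s i j| := Finset.sum_le_sum fun j _ => le_abs_self _
      _ ≤ ∑ i, ∑ j, |B s i j| := Finset.single_le_sum (f := fun i => ∑ j, |B s i j|)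
          (fun i _ => Finset.sum_nonneg fun j _ => abs_nonneg _) (Finset.mem_univ i)
      _ ≤ M := hM ⟨s, Ico_subset_Icc_self hs, rfl⟩
  calc -(M * r) ≤ ∑ j, B s i j * -r := by
        rw [← Finset.sum_mul]; linarith [mul_le_mul_of_nonneg_right hrow hr.le]
    _ ≤ ∑ j, B s i j * w s j := Finset.sum_le_sum fun j _ => by
        rcases eq_or_ne i j with rfl | hij
        · rw [hi]
        · exact mul_le_mul_of_nonneg_left (hge j) (hmetzler s hs.1 i j hij)
    _ = (B s *ᵥ w s) i := rfl

section ConeCoord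

variable {ι : Type*} [Fintype ι]

def coneCoord (c : ℝ) (y : ι → ℝ) : ι → ℝ := fun i => y i - c * ∑ j, y j

@[simp]
theorem coneCoord_zero (y : ι → ℝ) : coneCoord 0 y = y := by
  ext i
  simp [coneCoord]

theorem sum_coneCoord (c : ℝ) (y : ι → ℝ) :
    ∑ i, coneCoord c y i = (1 - Fintype.card ι * c) * ∑ i, y i := by
  simp only [coneCoord, Finset.sum_sub_distrib, Finset.sum_const, Finset.card_univ, nsmul_eq_mul]
  ring

-- the matrix of `ẏ = A y` in the coordinates `coneCoord c y` when `c` moves at speed `c'`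
noncomputable def coneCoordMatrix (A : Matrix ι ι ℝ) (c c' : ℝ) : Matrix ι ι ℝ :=
  Matrix.of fun i j => A i j - c * ∑ k, A k j +
    (c * ∑ k, A i k - c' - c ^ 2 * ∑ k, ∑ l, A k l) / (1 - Fintype.card ι * c)

theorem coneCoordMatrix_mulVec_coneCoord (A : Matrix ι ι ℝ) (y : ι → ℝ) {c : ℝ} (c' : ℝ)
    (hc : 1 - Fintype.card ι * c ≠ 0) :
    coneCoordMatrix A c c' *ᵥ coneCoord c y =
      fun i => (A *ᵥ y) i - (c' * ∑ j, y j + c * ∑ j, (A *ᵥ y) j) := by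
  ext i
  set w := coneCoord c y
  set S := ∑ j, y j
  set T := ∑ k, ∑ l, A k l
  set κ := (c * ∑ k, A i k - c' - c ^ 2 * T) / (1 - Fintype.card ι * c)
  have hrow : ∑ j, A i j * w j = (A *ᵥ y) i - c * S * ∑ k, A i k := by
    simp only [w, coneCoord, mul_sub, Finset.sum_sub_distrib, mulVec, dotProduct,
      ← Finset.sum_mul]
    ring
  have hcol : ∑ j, (∑ k, A k j) * w j = ∑ k, (A *ᵥ y) k - c * S * T := by
    simp only [w, coneCoord, mul_sub, Finset.sum_sub_distrib, mulVec, dotProduct,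
      Finset.sum_mul, T]
    rw [Finset.sum_comm, Finset.sum_comm (f := fun j k => A k j * (c * S))]
    simp only [← Finset.sum_mul]
    ring
  have hκ : κ * ((1 - Fintype.card ι * c) * S) = (c * ∑ k, A i k - c' - c ^ 2 * T) * S := by
    rw [← mul_assoc, div_mul_cancel₀ _ hc]
  have hexpand : (coneCoordMatrix A c c' *ᵥ w) i =
      ∑ j, (A i j * w j - c * ((∑ k, A k j) * w j) + κ * w j) :=
    Finset.sum_congr rfl fun j _ => by simp only [coneCoordMatrix, of_apply, κ, T]; ring
  rw [hexpand, Finset.sum_add_distrib, Finset.sum_sub_distrib, ← Finset.mul_sum, ← Finset.mul_sum,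
    hrow, hcol, sum_coneCoord, hκ]
  ring

theorem hasDerivAt_coneCoord {y : ℝ → ι → ℝ} {y' : ι → ℝ} {c : ℝ → ℝ} {c' t : ℝ}
    (hy : HasDerivAt y y' t) (hc : HasDerivAt c c' t) :
    HasDerivAt (fun s => coneCoord (c s) (y s))
      (fun i => y' i - (c' * ∑ j, y t j + c t * ∑ j, y' j)) t := by
  have hS : HasDerivAt (fun s => ∑ j, y s j) (∑ j, y' j) t :=
    HasDerivAt.fun_sum fun j _ => hasDerivAt_pi.1 hy j
  exact hasDerivAt_pi.2 fun i => (hasDerivAt_pi.1 hy i).sub (hc.mul hS)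

theorem coneCoordMatrix_nonneg {A : Matrix ι ι ℝ} {p β c : ℝ}
    (hbound : ∀ i j k l, p - A i j ≤ β ∧ |A i j - A k l| ≤ β)
    (hc0 : 0 ≤ c) (hc1 : Fintype.card ι * c < 1) (i j : ι) :
    0 ≤ coneCoordMatrix A c (p * (1 - Fintype.card ι * c) - 2 * β) i j := by
  set n : ℝ := (Fintype.card ι : ℝ)
  set D := 1 - n * c
  set a := A i j
  have hD : 0 < D := sub_pos.2 hc1
  have hβ : 0 ≤ β := (abs_nonneg _).trans (hbound i j i j).2
  have hp : p ≤ a + β := by linarith [(hbound i j i j).1]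
  have hlo : ∀ k l, a - β ≤ A k l := fun k l => by
    linarith [(abs_le.1 (hbound i j k l).2).2]
  have hhi : ∀ k l, A k l ≤ a + β := fun k l => by
    linarith [(abs_le.1 (hbound i j k l).2).1]
  have hrow_hi : ∀ k, ∑ l, A k l ≤ n * (a + β) := fun k => by
    have := Finset.sum_le_card_nsmul Finset.univ (A k ·) _ fun l _ => hhi k l
    rwa [Finset.card_univ, nsmul_eq_mul] at this
  have hcol : ∑ k, A k j ≤ n * (a + β) := by
    have := Finset.sum_le_card_nsmul Finset.univ (A · j) _ fun k _ => hhi k j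
    rwa [Finset.card_univ, nsmul_eq_mul] at this
  have hrow : n * (a - β) ≤ ∑ k, A i k := by
    have := Finset.card_nsmul_le_sum Finset.univ (A i ·) _ fun k _ => hlo i k
    rwa [Finset.card_univ, nsmul_eq_mul] at this
  have htot : ∑ k, ∑ l, A k l ≤ n * (n * (a + β)) := by
    have := Finset.sum_le_card_nsmul Finset.univ _ _ fun k _ => hrow_hi k
    rwa [Finset.card_univ, nsmul_eq_mul] at this
  have h1 : c * ∑ k, A k j ≤ c * (n * (a + β)) := mul_le_mul_of_nonneg_left hcol hc0
  have h2 : c * (n * (a - β)) ≤ c * ∑ k, A i k := mul_le_mul_of_nonneg_left hrow hc0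
  have h3 : c ^ 2 * ∑ k, ∑ l, A k l ≤ c ^ 2 * (n * (n * (a + β))) :=
    mul_le_mul_of_nonneg_left htot (sq_nonneg c)
  have h4 : (a - c * (n * (a + β))) * D ≤ (a - c * ∑ k, A k j) * D :=
    mul_le_mul_of_nonneg_right (by linarith) hD.le
  have hnum : 0 ≤ (a - c * ∑ k, A k j) * D +
      (c * ∑ k, A i k - (p * D - 2 * β) - c ^ 2 * ∑ k, ∑ l, A k l) := by
    linarith [mul_nonneg (by linarith : 0 ≤ a + 2 * β - p) hD.le]
  have hsplit : coneCoordMatrix A c (p * D - 2 * β) i j = ((a - c * ∑ k, A k j) * D +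
      (c * ∑ k, A i k - (p * D - 2 * β) - c ^ 2 * ∑ k, ∑ l, A k l)) / D := by
    simp only [coneCoordMatrix, of_apply]
    rw [add_div, mul_div_cancel_right₀ _ hD.ne']
  rw [hsplit]
  exact div_nonneg hnum hD.le

theorem nonneg_of_coneCoord_nonneg {c : ℝ} {y : ι → ℝ} (hc0 : 0 ≤ c)
    (hc1 : Fintype.card ι * c < 1) (hy : 0 ≤ coneCoord c y) : 0 ≤ y := by
  have hS : 0 ≤ ∑ j, y j := by
    have h := Finset.sum_nonneg fun j (_ : j ∈ Finset.univ) => hy j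
    rw [sum_coneCoord] at h
    exact nonneg_of_mul_nonneg_right h (sub_pos.2 hc1)
  exact fun i => (mul_nonneg hc0 hS).trans (sub_nonneg.1 (hy i))

end ConeCoord

theorem nonneg_of_hasDerivAt_mulVec_of_meanField {ι : Type*} [Fintype ι]
    {A : ℝ → Matrix ι ι ℝ} {y : ℝ → ι → ℝ} {p β c : ℝ → ℝ} {a : ℝ}
    (hA : ContinuousOn A (Ici a)) (hp : ContinuousOn p (Ici a)) (hβ : ContinuousOn β (Ici a))
    (hbound : ∀ t ≥ a, ∀ i j k l, p t - A t i j ≤ β t ∧ |A t i j - A t k l| ≤ β t)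
    (hc : ∀ t ≥ a, HasDerivAt c (p t * (1 - Fintype.card ι * c t) - 2 * β t) t)
    (hc0 : ∀ t ≥ a, 0 ≤ c t) (hc1 : ∀ t ≥ a, Fintype.card ι * c t < 1)
    (hy : ∀ t ≥ a, HasDerivAt y (A t *ᵥ y t) t) (hya : 0 ≤ coneCoord (c a) (y a)) :
    ∀ t ≥ a, 0 ≤ y t := by
  set c' := fun t => p t * (1 - Fintype.card ι * c t) - 2 * β t
  have hccont : ContinuousOn c (Ici a) := fun t ht => (hc t ht).continuousAt.continuousWithinAt
  have hD : ∀ t ∈ Ici a, 1 - Fintype.card ι * c t ≠ 0 := fun t ht => (sub_pos.2 (hc1 t ht)).ne'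
  have hB : ContinuousOn (fun t => coneCoordMatrix (A t) (c t) (c' t)) (Ici a) := by
    simp only [coneCoordMatrix, c']
    fun_prop (disch := exact hD)
  have hw := nonneg_of_hasDerivAt_mulVec_of_metzler hB
    (fun t ht i j _ => coneCoordMatrix_nonneg (hbound t ht) (hc0 t ht) (hc1 t ht) i j)
    (fun t ht => (hasDerivAt_coneCoord (hy t ht) (hc t ht)).congr_deriv
      (coneCoordMatrix_mulVec_coneCoord _ _ _ (hD t ht)).symm) hya
  exact fun t ht => nonneg_of_coneCoord_nonneg (hc0 t ht) (hc1 t ht) (hw t ht)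

theorem Function.Periodic.exists_mem_Icc_forall_ge {α : Type*} [LinearOrder α]
    [TopologicalSpace α] [ClosedIciTopology α] {f : ℝ → α} {T : ℝ} (hf : Function.Periodic f T)
    (hT : 0 < T) (hcont : Continuous f) (a : ℝ) :
    ∃ x ∈ Icc a (a + T), ∀ y, f y ≤ f x := by
  obtain ⟨x, hx, hmax⟩ := (isCompact_Icc (a := a) (b := a + T)).exists_isMaxOn
    (nonempty_Icc.2 (by linarith)) hcont.continuousOn
  refine ⟨x, hx, fun y => ?_⟩
  obtain ⟨z, hz, hyz⟩ := hf.exists_mem_Ico hT y a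
  exact hyz ▸ hmax (Ico_subset_Icc_self hz)

theorem hasDerivAt_exp_integral {k : ℝ → ℝ} (hk : Continuous k) (a t : ℝ) :
    HasDerivAt (fun s => Real.exp (∫ u in a..s, k u)) (k t * Real.exp (∫ u in a..t, k u)) t :=
  (hk.integral_hasStrictDerivAt a t).hasDerivAt.exp.congr_deriv (mul_comm _ _)

theorem antitone_div_of_hasDerivAt_affine {u v k b : ℝ → ℝ}
    (hu : ∀ t, HasDerivAt u (k t * u t + b t) t) (hv : ∀ t, HasDerivAt v (k t * v t + b t) t)
    (hb : ∀ t, 0 ≤ b t) (hu0 : ∀ t, 0 < u t) (huv : ∀ t, u t ≤ v t) :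
    Antitone fun t => v t / u t :=
  antitone_of_hasDerivAt_nonpos (fun t => (hv t).div (hu t) (hu0 t).ne') fun t =>
    div_nonpos_of_nonpos_of_nonneg (by nlinarith [mul_nonneg (hb t) (sub_nonneg.2 (huv t))])
      (sq_nonneg _)

theorem exists_cone_coefficient {m d tx : ℝ} {p β θ : ℝ → ℝ} (hm : 0 < m) (hd : 0 < d)
    (hp : Continuous p) (hβ : ∀ t, 0 ≤ β t) (hθpos : ∀ t, 0 < θ t)
    (hθode : ∀ t, HasDerivAt θ (-m * p t * θ t + 2 * m * d * β t) t)
    (hθd : θ tx ≤ d) (hmax : ∀ t ≥ tx, θ t ≤ θ tx) :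
    ∃ c : ℝ → ℝ, c tx = 0 ∧ (∀ t, HasDerivAt c (p t * (1 - m * c t) - 2 * β t) t) ∧
      (∀ t, m * c t < 1) ∧ ∀ t ≥ tx, 0 ≤ c t := by
  set E := fun t => Real.exp (∫ s in tx..t, -m * p s)
  set G := fun t => θ t + (d - θ tx) * E t
  have hG : ∀ t, HasDerivAt G (-m * p t * G t + 2 * m * d * β t) t := fun t =>
    ((hθode t).add ((hasDerivAt_exp_integral (by fun_prop) tx t).const_mul (d - θ tx))).congr_deriv
      (by simp only [G, E]; ring)
  have hθG : ∀ t, θ t ≤ G t := fun t =>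
    le_add_of_nonneg_right (mul_nonneg (sub_nonneg.2 hθd) (Real.exp_pos _).le)
  have hGtx : G tx = d := by simp [G, E]
  have hGd : ∀ t ≥ tx, G t ≤ d := fun t ht => by
    have hratio := antitone_div_of_hasDerivAt_affine hθode hG
      (fun t => mul_nonneg (by positivity) (hβ t)) hθpos hθG ht
    simp only [hGtx] at hratio
    rw [div_le_div_iff₀ (hθpos t) (hθpos tx)] at hratio
    exact le_of_mul_le_mul_right
      (hratio.trans (mul_le_mul_of_nonneg_left (hmax t ht) hd.le)) (hθpos tx)
  refine ⟨fun t => (1 - G t / d) / m, by simp [hGtx, hd.ne'], fun t => ?_, fun t => ?_,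
    fun t ht => ?_⟩
  · refine (((hG t).div_const d).const_sub 1 |>.div_const m).congr_deriv ?_
    field_simp
    ring
  · have hGpos : 0 < G t := (hθpos t).trans_le (hθG t)
    rw [mul_div_cancel₀ _ hm.ne']
    linarith [div_pos hGpos hd]
  · exact div_nonneg (sub_nonneg.2 ((div_le_one hd).2 (hGd t ht))) hm.le

theorem stmt_6_general (n : ℕ) (hn : 0 < n) (t₀ : ℝ)
    (C : Set (Fin n → ℝ))
    (A : (Fin n → ℝ) → ℝ → Matrix (Fin n) (Fin n) ℝ)
    (hAc : Continuous fun q : (Fin n → ℝ) × ℝ => A q.1 q.2)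
    -- `Ψ x s t z` : value at time `t` of the solution of `ẏ = A(x,t)y` equal to `z`
    -- at time `s`.
    (Ψ : (Fin n → ℝ) → ℝ → ℝ → (Fin n → ℝ) → (Fin n → ℝ))
    (hΨ0 : ∀ x s z, Ψ x s s z = z)
    (hΨ : ∀ x s z t, HasDerivAt (fun u => Ψ x s u z) (A x t *ᵥ Ψ x s t z) t)
    (p β : ℝ → ℝ) (hp : Continuous p) (hβ : Continuous β)
    (hβpos : ∀ t, 0 < β t)
    (hbound : ∀ t ≥ t₀, ∀ x ∈ C, ∀ i j k l,
      p t - A x t i j < β t ∧ |A x t i j - A x t k l| < β t)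
    (d : ℝ) (hd : 0 < d) (θ : ℝ → ℝ)
    (hθper : ∀ t, θ (t + 1) = θ t) (hθpos : ∀ t, 0 < θ t)
    (hθode : ∀ t, HasDerivAt θ (-(n : ℝ) * p t * θ t + 2 * (n : ℝ) * d * β t) t)
    (hθd : ∀ t, θ t < d) :
    ∀ x ∈ C, ∃ tx ∈ Set.Icc t₀ (t₀ + 1), (∀ t, θ t ≤ θ tx) ∧
      ∀ t ≥ tx, ∀ z : Fin n → ℝ, (∀ i, 0 ≤ z i) → ∀ i, 0 ≤ Ψ x tx t z i := by
  intro x hx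
  have hθcont : Continuous θ := continuous_iff_continuousAt.2 fun t => (hθode t).continuousAt
  obtain ⟨tx, htx, hmax⟩ := Function.Periodic.exists_mem_Icc_forall_ge hθper one_pos hθcont t₀
  refine ⟨tx, htx, hmax, fun t ht z hz => ?_⟩
  obtain ⟨c, hctx, hc, hc1, hc0⟩ := exists_cone_coefficient (Nat.cast_pos.2 hn) hd hp
    (fun t => (hβpos t).le) hθpos hθode (hθd tx).le fun t _ => hmax t
  have hAx : Continuous (A x) := hAc.comp (Continuous.prodMk_right x)
  have hstart : coneCoord (c tx) (Ψ x tx tx z) = z := by simp [hctx, hΨ0]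
  refine nonneg_of_hasDerivAt_mulVec_of_meanField hAx.continuousOn hp.continuousOn
    hβ.continuousOn (fun s hs i j k l => ?_) (by simpa using fun s _ => hc s) hc0
    (fun s _ => by simpa using hc1 s) (fun s _ => hΨ x tx z s) (by rw [hstart]; exact hz) t ht
  have h := hbound s (htx.1.trans hs) x hx i j k l
  exact ⟨h.1.le, h.2.le⟩

/-- mean-field invariant cone proposition. Under the closeness and
lower-bound assumptions on the entries of `A(x,t)` in terms of `1`-periodic `p, β`,
and assuming a positive `1`-periodic solution `θ < d` of `θ̇ = −npθ + 2ndβ`,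
the positive orthant `V₊` is `Ψ^{t−t₀}_C`-positive invariant with control time `1`:
for every `x ∈ C` there is a time `tₓ ∈ [t₀, t₀+1]` where `θ` attains its maximum
such that `Ψₓ^{t−tₓ}(V₊) ⊆ V₊` for all `t ≥ tₓ`. -/
theorem stmt_6 (n : ℕ) (hn : 0 < n) (t₀ : ℝ)
    (C : Set (Fin n → ℝ))
    (A : (Fin n → ℝ) → ℝ → Matrix (Fin n) (Fin n) ℝ)
    (hAc : Continuous fun q : (Fin n → ℝ) × ℝ => A q.1 q.2)
    -- `Ψ x s t z` : value at time `t` of the solution of `ẏ = A(x,t)y` equal to `z`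
    -- at time `s`.
    (Ψ : (Fin n → ℝ) → ℝ → ℝ → (Fin n → ℝ) → (Fin n → ℝ))
    (hΨ0 : ∀ x s z, Ψ x s s z = z)
    (hΨ : ∀ x s z t, HasDerivAt (fun u => Ψ x s u z) (A x t *ᵥ Ψ x s t z) t)
    (p β : ℝ → ℝ) (hp : Continuous p) (hβ : Continuous β)
    (hpper : ∀ t, p (t + 1) = p t) (hβper : ∀ t, β (t + 1) = β t)
    (hβpos : ∀ t, 0 < β t)
    (hbound : ∀ t ≥ t₀, ∀ x ∈ C, ∀ i j k l,
      p t - A x t i j < β t ∧ |A x t i j - A x t k l| < β t)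
    (d : ℝ) (hd : 0 < d) (θ : ℝ → ℝ)
    (hθper : ∀ t, θ (t + 1) = θ t) (hθpos : ∀ t, 0 < θ t)
    (hθode : ∀ t, HasDerivAt θ (-(n : ℝ) * p t * θ t + 2 * (n : ℝ) * d * β t) t)
    (hθd : ∀ t, θ t < d) :
    ∀ x ∈ C, ∃ tx ∈ Set.Icc t₀ (t₀ + 1), (∀ t, θ t ≤ θ tx) ∧
      ∀ t ≥ tx, ∀ z : Fin n → ℝ, (∀ i, 0 ≤ z i) → ∀ i, 0 ≤ Ψ x tx t z i :=
  stmt_6_general n hn t₀ C A hAc Ψ hΨ0 hΨ p β hp hβ hβpos hbound d hd θ hθper hθpos hθode hθd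
end

section
/- For the Winfree model ẋᵢ = ωᵢ − κσ(x)R(xᵢ) with σ(x) = (1/n)Σⱼ P(xⱼ), if ωᵢ ∈ (1−γ, 1+γ), |xᵢ − xⱼ| < D for all i,j, P and R are C¹ with ‖P'‖∞‖R‖∞ ≤ C̃/2, and 1 − κP(xᵢ)R(xᵢ) ≥ 1 − κ/κ*, then for each i: 1 − γ − C̃κD − κ/κ* < ωᵢ − κσ(x)R(xᵢ) < 1 + γ + κC̃. -/
/-!
Write the coupling `σ(x) R(xᵢ)` as `P(xᵢ) R(xᵢ)` minus the mean over `j` of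
`(P(xᵢ) - P(xⱼ)) R(xᵢ)`. The first term is controlled by the locking hypothesis, and each term
of the mean by the mean value theorem, `|x_i - x_j| < D` and `‖P'‖‖R‖ ≤ C̃/2`. The upper bound
follows from `|σ(x) R(xᵢ)| ≤ C̃/2`.
-/

open scoped BigOperators

open Finset

theorem abs_sub_mul_le_of_abs_deriv_mul_le {f : ℝ → ℝ} (hf : Differentiable ℝ f) {c C : ℝ}
    (h : ∀ s, |deriv f s| * |c| ≤ C) (a b : ℝ) : |(f a - f b) * c| ≤ C * |a - b| := by
  have hderiv : ∀ s, deriv (fun s ↦ f s * c) s = deriv f s * c := fun s ↦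
    deriv_mul_const (hf s) c
  have := convex_univ.norm_image_sub_le_of_norm_deriv_le
    (fun s _ ↦ ((hf s).mul_const c)) (fun s _ ↦ by simpa [hderiv, abs_mul] using h s)
    (Set.mem_univ b) (Set.mem_univ a)
  simpa [sub_mul] using this

theorem expect_eq_sub_expect_sub {ι M : Type*} [Fintype ι] [Nonempty ι] [AddCommGroup M]
    [Module ℚ≥0 M] (f : ι → M) (i : ι) : 𝔼 j, f j = f i - 𝔼 j, (f i - f j) := by
  rw [expect_sub_distrib, Fintype.expect_const, sub_sub_cancel]

theorem abs_expect_le_of_forall_abs_le {ι α : Type*} [Field α] [LinearOrder α]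
    [IsStrictOrderedRing α]
    {s : Finset ι} {f : ι → α} {B : α} (hs : s.Nonempty) (h : ∀ i ∈ s, |f i| ≤ B) :
    |𝔼 i ∈ s, f i| ≤ B :=
  (abs_expect_le s f).trans (expect_le hs h)

theorem stmt_12_general (n : ℕ)
    (P R : ℝ → ℝ) (hP : ContDiff ℝ 1 P)
    (γ κ D Ct κstar : ℝ) (hκ : 0 < κ)
    (ω : Fin n → ℝ) (hω : ∀ i, ω i ∈ Set.Ioo (1 - γ) (1 + γ))
    (x : Fin n → ℝ) (hx : ∀ i j, |x i - x j| < D)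
    (hP'R : ∀ s t, |deriv P s| * |R t| ≤ Ct / 2)
    (hPR : ∀ s t, |P s| * |R t| ≤ Ct / 2)
    (hlock : ∀ i, 1 - κ / κstar ≤ 1 - κ * P (x i) * R (x i)) :
    ∀ i, 1 - γ - Ct * κ * D - κ / κstar <
        ω i - κ * ((1 / (n : ℝ)) * ∑ j, P (x j)) * R (x i) ∧
      ω i - κ * ((1 / (n : ℝ)) * ∑ j, P (x j)) * R (x i) < 1 + γ + κ * Ct := by
  intro i
  have : Nonempty (Fin n) := ⟨i⟩
  have hCt_half : 0 ≤ Ct / 2 := (by positivity : 0 ≤ |deriv P 0| * |R 0|).trans (hP'R 0 0)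
  have hD_nonneg : 0 ≤ D := (abs_nonneg _).trans (hx i i).le
  have hcoupling : κ * ((1 / (n : ℝ)) * ∑ j, P (x j)) * R (x i) =
      κ * 𝔼 j, P (x j) * R (x i) := by
    rw [Fintype.expect_eq_sum_div_card, Fintype.card_fin, ← sum_mul]
    ring
  rw [hcoupling]
  have hsize : |𝔼 j, P (x j) * R (x i)| ≤ Ct / 2 :=
    abs_expect_le_of_forall_abs_le univ_nonempty fun j _ ↦ (abs_mul _ _).trans_le (hPR _ _)
  have hspread : |𝔼 j, (P (x i) * R (x i) - P (x j) * R (x i))| ≤ Ct / 2 * D :=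
    abs_expect_le_of_forall_abs_le univ_nonempty fun j _ ↦ by
      rw [← sub_mul]
      exact (abs_sub_mul_le_of_abs_deriv_mul_le (hP.differentiable one_ne_zero)
        (fun s ↦ hP'R s _) _ _).trans (mul_le_mul_of_nonneg_left (hx i j).le hCt_half)
  obtain ⟨hω₁, hω₂⟩ := hω i
  have hlock_i := hlock i
  constructor
  · rw [expect_eq_sub_expect_sub _ i]
    nlinarith [(abs_le.mp hspread).1, mul_nonneg hCt_half hD_nonneg]
  · nlinarith [(abs_le.mp hsize).1]

/-- bounds on the velocities of the Winfree model,
`1 − γ − C̃κD − κ/κ* < ωᵢ − κσ(x)R(xᵢ) < 1 + γ + κC̃`. -/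
theorem stmt_12 (n : ℕ) (hn : 0 < n)
    (P R : ℝ → ℝ) (hP : ContDiff ℝ 1 P) (hR : ContDiff ℝ 1 R)
    (γ κ D Ct κstar : ℝ) (hγ : 0 < γ) (hκ : 0 < κ) (hD : 0 < D) (hCt : 0 ≤ Ct)
    (ω : Fin n → ℝ) (hω : ∀ i, ω i ∈ Set.Ioo (1 - γ) (1 + γ))
    (x : Fin n → ℝ) (hx : ∀ i j, |x i - x j| < D)
    (hP'R : ∀ s t, |deriv P s| * |R t| ≤ Ct / 2)
    (hPR : ∀ s t, |P s| * |R t| ≤ Ct / 2)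
    (hlock : ∀ i, 1 - κ / κstar ≤ 1 - κ * P (x i) * R (x i)) :
    ∀ i, 1 - γ - Ct * κ * D - κ / κstar <
        ω i - κ * ((1 / (n : ℝ)) * ∑ j, P (x j)) * R (x i) ∧
      ω i - κ * ((1 / (n : ℝ)) * ∑ j, P (x j)) * R (x i) < 1 + γ + κ * Ct :=
  stmt_12_general n P R hP γ κ D Ct κstar hκ ω hω x hx hP'R hPR hlock
end
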